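/- Let N be a positive integer and μ, ε > 0 real. Let D₁, D₂, D₃ be pairwise commuting skew-symmetric real N×N matrices, 𝔻 := [[0, −D₃, D₂], [D₃, 0, −D₁], [−D₂, D₁, 0]] (3N×3N), 𝒟 := (1/√(με))·[[0, −𝔻], [𝔻, 0]] (6N×6N), and for k = 1, 2, 3 let B_k be the block-diagonal 3N×3N matrix with each diagonal block equal to D_k. Given H⁰, E⁰ ∈ ℝ^(3N), define (√μ·H^t, √ε·E^t) = exp(t𝒟)·(√μ·H⁰, √ε·E⁰) and set Ḣ^t := −(1/μ)·𝔻·E^t, Ė^t := (1/ε)·𝔻·H^t. Then for each k = 1, 2, 3 and all t ∈ ℝ: μ·‖B_k Ḣ^t‖² + ε·‖B_k Ė^t‖² = μ·‖B_k Ḣ⁰‖² + ε·‖B_k Ė⁰‖². -/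

import Mathlib

open Matrix

/-- A `3N × 3N` block matrix built from a `3 × 3` array of `N × N` blocks. -/
def blockMat3 {N : ℕ} {α : Type*} (A : Fin 3 → Fin 3 → Matrix (Fin N) (Fin N) α) :
    Matrix (Fin 3 × Fin N) (Fin 3 × Fin N) α :=
  Matrix.of fun p q => A p.1 q.1 p.2 q.2

/-- The `3N × 3N` block-diagonal matrix with each diagonal block equal to `D`. -/
def blockDiag3 {N : ℕ} {α : Type*} [Zero α] (D : Matrix (Fin N) (Fin N) α) :
    Matrix (Fin 3 × Fin N) (Fin 3 × Fin N) α :=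
  Matrix.of fun p q => if p.1 = q.1 then D p.2 q.2 else 0

/-!
Write `v(t) = (√μ H^t, √ε E^t)`, so that `v(t) = exp(t𝒟) v(0)`. The semidiscrete equations say
`𝒟 v(t) = (√μ Ḣ^t, √ε Ė^t)`, hence the energy at time `t` is `‖P v(t)‖²` with
`P = diag(B_k, B_k) 𝒟`. Because the `D_j` commute, `B_k` commutes with `𝔻`, so `P` commutes with
`𝒟` and therefore with `exp(t𝒟)`; and `𝔻` is symmetric, so `𝒟` is skew-symmetric and `exp(t𝒟)` is
orthogonal. Thus `‖P v(t)‖² = ‖exp(t𝒟) P v(0)‖² = ‖P v(0)‖²`.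
-/

section Orthogonal

variable {n : Type*} [Fintype n] [DecidableEq n]

theorem Matrix.transpose_mul_self_exp_of_transpose_eq_neg {A : Matrix n n ℝ} (hA : Aᵀ = -A) :
    (NormedSpace.exp A)ᵀ * NormedSpace.exp A = 1 := by
  rw [← Matrix.exp_transpose, hA, ← Matrix.exp_add_of_commute _ _ (Commute.refl A).neg_left,
    neg_add_cancel, NormedSpace.exp_zero]

theorem Matrix.sum_sq_mulVec_of_transpose_mul_self {Q : Matrix n n ℝ} (hQ : Qᵀ * Q = 1)
    (w : n → ℝ) : ∑ i, (Q *ᵥ w) i ^ 2 = ∑ i, w i ^ 2 := by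
  have hsq (v : n → ℝ) : ∑ i, v i ^ 2 = v ⬝ᵥ v := by simp [dotProduct, sq]
  rw [hsq, hsq, dotProduct_mulVec, ← mulVec_transpose, mulVec_mulVec, hQ, one_mulVec]

theorem Matrix.sum_sq_mulVec_exp_mulVec {A P : Matrix n n ℝ} (hA : Aᵀ = -A) (hPA : Commute P A)
    (w : n → ℝ) : ∑ i, (P *ᵥ (NormedSpace.exp A *ᵥ w)) i ^ 2 = ∑ i, (P *ᵥ w) i ^ 2 := by
  rw [mulVec_mulVec, hPA.exp_right.eq, ← mulVec_mulVec,
    sum_sq_mulVec_of_transpose_mul_self (transpose_mul_self_exp_of_transpose_eq_neg hA)]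

end Orthogonal

section Blocks

variable {N : ℕ}

theorem blockMat3_mul {α : Type*} [NonUnitalNonAssocSemiring α]
    (A B : Fin 3 → Fin 3 → Matrix (Fin N) (Fin N) α) :
    blockMat3 A * blockMat3 B = blockMat3 fun i j => ∑ l, A i l * B l j := by
  ext ⟨i, a⟩ ⟨j, b⟩
  simp [blockMat3, mul_apply, Fintype.sum_prod_type, Matrix.sum_apply]

theorem blockMat3_transpose {α : Type*} (A : Fin 3 → Fin 3 → Matrix (Fin N) (Fin N) α) :
    (blockMat3 A)ᵀ = blockMat3 fun i j => (A j i)ᵀ := by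
  ext ⟨i, a⟩ ⟨j, b⟩
  rfl

theorem blockDiag3_eq_blockMat3 {α : Type*} [Zero α] (D : Matrix (Fin N) (Fin N) α) :
    blockDiag3 D = blockMat3 fun i j => if i = j then D else 0 := by
  ext ⟨i, a⟩ ⟨j, b⟩
  simp only [blockDiag3, blockMat3, of_apply]
  split <;> simp

variable {R : Type*} [CommRing R] (D1 D2 D3 : Matrix (Fin N) (Fin N) R)

theorem blockMat3_curl_transpose (hD1 : D1ᵀ = -D1) (hD2 : D2ᵀ = -D2) (hD3 : D3ᵀ = -D3) :
    (blockMat3 ![![0, -D3, D2], ![D3, 0, -D1], ![-D2, D1, 0]])ᵀ =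
      blockMat3 ![![0, -D3, D2], ![D3, 0, -D1], ![-D2, D1, 0]] := by
  rw [blockMat3_transpose]
  congr
  ext i j : 2
  fin_cases i <;> fin_cases j <;> simp [hD1, hD2, hD3]

theorem blockDiag3_commute_curl {D : Matrix (Fin N) (Fin N) R} (h1 : Commute D D1)
    (h2 : Commute D D2) (h3 : Commute D D3) :
    Commute (blockDiag3 D) (blockMat3 ![![0, -D3, D2], ![D3, 0, -D1], ![-D2, D1, 0]]) := by
  rw [Commute, SemiconjBy, blockDiag3_eq_blockMat3, blockMat3_mul, blockMat3_mul]
  congr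
  ext i j : 2
  fin_cases i <;> fin_cases j <;> simp [h1.eq, h2.eq, h3.eq]

end Blocks

section Maxwell

theorem fromBlocks_offDiag_transpose {n : Type*} {C : Matrix n n ℝ} (hC : Cᵀ = C) (c : ℝ) :
    (c • fromBlocks 0 (-C) C 0)ᵀ = -(c • fromBlocks 0 (-C) C 0) := by
  rw [transpose_smul, fromBlocks_transpose, transpose_neg, hC, transpose_zero, ← smul_neg,
    fromBlocks_neg, neg_zero, neg_neg]

variable {n : Type*} [Fintype n]

theorem commute_fromBlocks_diag_offDiag {B C : Matrix n n ℝ} (h : Commute B C) :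
    Commute (fromBlocks B 0 0 B) (fromBlocks 0 (-C) C 0) := by
  simp [Commute, SemiconjBy, fromBlocks_multiply, h.eq]

theorem maxwell_mulVec_scaled {μ ε : ℝ} (hμ : 0 < μ) (hε : 0 < ε) (C : Matrix n n ℝ)
    (H E : n → ℝ) :
    ((√(μ * ε))⁻¹ • fromBlocks 0 (-C) C 0) *ᵥ Sum.elim (√μ • H) (√ε • E) =
      Sum.elim (√μ • (-(1 / μ)) • C *ᵥ E) (√ε • (1 / ε) • C *ᵥ H) := by
  have hμ0 := (Real.sqrt_pos.2 hμ).ne'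
  have hε0 := (Real.sqrt_pos.2 hε).ne'
  rw [smul_mulVec, fromBlocks_mulVec, Real.sqrt_mul hμ.le]
  ext (i | i) <;> simp [mulVec_smul, neg_mulVec] <;> field_simp <;> simp [hμ.le, hε.le, mul_comm]

theorem sum_sq_fromBlocks_diag_mulVec (B : Matrix n n ℝ) (a b : ℝ) (x y : n → ℝ) :
    ∑ i, (fromBlocks B 0 0 B *ᵥ Sum.elim (a • x) (b • y)) i ^ 2 =
      a ^ 2 * ∑ i, (B *ᵥ x) i ^ 2 + b ^ 2 * ∑ i, (B *ᵥ y) i ^ 2 := by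
  simp [fromBlocks_mulVec, Fintype.sum_sum_type, mulVec_smul, mul_pow, Finset.mul_sum]

end Maxwell

theorem discrete_energy_conservation_E4_general {N : ℕ} (μ ε : ℝ) (hμ : 0 < μ) (hε : 0 < ε)
    (D1 D2 D3 : Matrix (Fin N) (Fin N) ℝ)
    (h12 : D1 * D2 = D2 * D1) (h13 : D1 * D3 = D3 * D1) (h23 : D2 * D3 = D3 * D2)
    (hD1 : D1ᵀ = -D1) (hD2 : D2ᵀ = -D2) (hD3 : D3ᵀ = -D3)
    (𝔻 : Matrix (Fin 3 × Fin N) (Fin 3 × Fin N) ℝ)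
    (h𝔻 : 𝔻 = blockMat3 ![![0, -D3, D2], ![D3, 0, -D1], ![-D2, D1, 0]])
    (𝒟 : Matrix ((Fin 3 × Fin N) ⊕ (Fin 3 × Fin N)) ((Fin 3 × Fin N) ⊕ (Fin 3 × Fin N)) ℝ)
    (h𝒟 : 𝒟 = (Real.sqrt (μ * ε))⁻¹ • Matrix.fromBlocks 0 (-𝔻) 𝔻 0)
    (H E : ℝ → (Fin 3 × Fin N → ℝ))
    (hprop : ∀ t : ℝ,
      Sum.elim (fun i => Real.sqrt μ * H t i) (fun i => Real.sqrt ε * E t i) =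
        (NormedSpace.exp (t • 𝒟)).mulVec
          (Sum.elim (fun i => Real.sqrt μ * H 0 i) (fun i => Real.sqrt ε * E 0 i)))
    (B : Fin 3 → Matrix (Fin 3 × Fin N) (Fin 3 × Fin N) ℝ)
    (hB : ∀ k : Fin 3, B k = blockDiag3 (![D1, D2, D3] k))
    (Hdot Edot : ℝ → (Fin 3 × Fin N → ℝ))
    (hHdot : ∀ t : ℝ, Hdot t = (-(1 / μ)) • 𝔻.mulVec (E t))
    (hEdot : ∀ t : ℝ, Edot t = (1 / ε) • 𝔻.mulVec (H t)) :
    ∀ k : Fin 3, ∀ t : ℝ,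
      μ * (∑ i, (B k).mulVec (Hdot t) i ^ 2) + ε * (∑ i, (B k).mulVec (Edot t) i ^ 2) =
        μ * (∑ i, (B k).mulVec (Hdot 0) i ^ 2) + ε * (∑ i, (B k).mulVec (Edot 0) i ^ 2) := by
  intro k t
  have hB𝔻 : Commute (B k) 𝔻 := by
    rw [hB, h𝔻]
    fin_cases k
    exacts [blockDiag3_commute_curl _ _ _ (.refl _) h12 h13,
      blockDiag3_commute_curl _ _ _ h12.symm (.refl _) h23,
      blockDiag3_commute_curl _ _ _ h13.symm h23.symm (.refl _)]
  have h𝔻symm : 𝔻ᵀ = 𝔻 := h𝔻 ▸ blockMat3_curl_transpose _ _ _ hD1 hD2 hD3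
  have h𝒟skew : 𝒟ᵀ = -𝒟 := h𝒟 ▸ fromBlocks_offDiag_transpose h𝔻symm _
  set M := fromBlocks (B k) 0 0 (B k)
  have hM𝒟 : Commute M 𝒟 := h𝒟 ▸ (commute_fromBlocks_diag_offDiag hB𝔻).smul_right _
  have henergy : ∀ s, μ * (∑ i, (B k *ᵥ Hdot s) i ^ 2) + ε * (∑ i, (B k *ᵥ Edot s) i ^ 2) =
      ∑ i, ((M * 𝒟) *ᵥ Sum.elim (√μ • H s) (√ε • E s)) i ^ 2 := fun s => by
    rw [← mulVec_mulVec, h𝒟, maxwell_mulVec_scaled hμ hε, ← hHdot, ← hEdot,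
      sum_sq_fromBlocks_diag_mulVec, Real.sq_sqrt hμ.le, Real.sq_sqrt hε.le]
  rw [henergy, henergy, show Sum.elim (√μ • H t) (√ε • E t) = _ from hprop t]
  exact sum_sq_mulVec_exp_mulVec (by rw [transpose_smul, h𝒟skew, smul_neg])
    ((hM𝒟.mul_left (.refl 𝒟)).smul_right t) _

/-- the fully discrete exponential scheme exactly conserves the discrete energy ℰ₄: `μ‖B_k Ḣᵗ‖² + ε‖B_k Ėᵗ‖²` is constant in `t` for each `k`. -/
theorem discrete_energy_conservation_E4 {N : ℕ} (hN : 0 < N) (μ ε : ℝ) (hμ : 0 < μ) (hε : 0 < ε)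
    (D1 D2 D3 : Matrix (Fin N) (Fin N) ℝ)
    (h12 : D1 * D2 = D2 * D1) (h13 : D1 * D3 = D3 * D1) (h23 : D2 * D3 = D3 * D2)
    (hD1 : D1ᵀ = -D1) (hD2 : D2ᵀ = -D2) (hD3 : D3ᵀ = -D3)
    (𝔻 : Matrix (Fin 3 × Fin N) (Fin 3 × Fin N) ℝ)
    (h𝔻 : 𝔻 = blockMat3 ![![0, -D3, D2], ![D3, 0, -D1], ![-D2, D1, 0]])
    (𝒟 : Matrix ((Fin 3 × Fin N) ⊕ (Fin 3 × Fin N)) ((Fin 3 × Fin N) ⊕ (Fin 3 × Fin N)) ℝ)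
    (h𝒟 : 𝒟 = (Real.sqrt (μ * ε))⁻¹ • Matrix.fromBlocks 0 (-𝔻) 𝔻 0)
    (H E : ℝ → (Fin 3 × Fin N → ℝ))
    (hprop : ∀ t : ℝ,
      Sum.elim (fun i => Real.sqrt μ * H t i) (fun i => Real.sqrt ε * E t i) =
        (NormedSpace.exp (t • 𝒟)).mulVec
          (Sum.elim (fun i => Real.sqrt μ * H 0 i) (fun i => Real.sqrt ε * E 0 i)))
    (B : Fin 3 → Matrix (Fin 3 × Fin N) (Fin 3 × Fin N) ℝ)
    (hB : ∀ k : Fin 3, B k = blockDiag3 (![D1, D2, D3] k))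
    (Hdot Edot : ℝ → (Fin 3 × Fin N → ℝ))
    (hHdot : ∀ t : ℝ, Hdot t = (-(1 / μ)) • 𝔻.mulVec (E t))
    (hEdot : ∀ t : ℝ, Edot t = (1 / ε) • 𝔻.mulVec (H t)) :
    ∀ k : Fin 3, ∀ t : ℝ,
      μ * (∑ i, (B k).mulVec (Hdot t) i ^ 2) + ε * (∑ i, (B k).mulVec (Edot t) i ^ 2) =
        μ * (∑ i, (B k).mulVec (Hdot 0) i ^ 2) + ε * (∑ i, (B k).mulVec (Edot 0) i ^ 2) :=
  discrete_energy_conservation_E4_general μ ε hμ hε D1 D2 D3 h12 h13 h23 hD1 hD2 hD3 𝔻 h𝔻 𝒟 h𝒟 H E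
    hprop B hB Hdot Edot hHdot hEdot
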